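/- Let d ∈ ℤ⁺, λ > 0, G ≥ 0, and let K' = {x ∈ ℝ^n : ‖x‖₂ ≤ 2G/λ}. Let f_1, …, f_T : ℝ^n → ℝ be λ-strongly convex over K' with ‖∇f_t(x)‖₂ ≤ G for all x ∈ K' and all t, and suppose the minimizer of Σ_{t=1}^T f_t over ℝ^n lies in K'. For each t let F_t satisfy {1,…,t−d} ⊆ F_t ⊆ {1,…,t−1}, set z_s = ∇f_s(x_s) − λ x_s, and let x_t be a minimizer over K' of Σ_{s∈F_t} (⟨z_s, x⟩ + (λ/2)‖x‖₂²) (an arbitrary x_t ∈ K' when F_t = ∅). Then Σ_{t=1}^T f_t(x_t) − min_{x∈ℝ^n} Σ_{t=1}^T f_t(x) ≤ 50dG²(ln T + 1)/λ. -/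

import Mathlib

/-!
Replace each loss `f_s` by its quadratic lower model `⟪z_s, w⟫ + λ/2‖w‖²` at `x_s`; strong convexity
makes the true regret against `x*` at most the regret on these surrogates. For the surrogates,
the leaders `u_t` (exact minimizers of the first `t` surrogates) have nonpositive regret by
"be the leader", so it remains to compare `x_t` with `u_t`. The two objectives differ by at most
`d` surrogates, each `L`-Lipschitz on the ball with `L = G + 2λR = 5G`, while the leader's objective
is `tλ`-strongly convex; hence `‖x_t - u_t‖ ≤ 2dL/(tλ)` and the round costs at most `2dL²/(tλ)`.
Summing the harmonic series gives `2dL²(ln T + 1)/λ`.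
-/

open scoped RealInnerProductSpace
open Finset Filter Topology

section
variable {E : Type*} [NormedAddCommGroup E] [InnerProductSpace ℝ E]

theorem StrongConvexOn.add_sq_le_of_isMinOn {s : Set E} {m : ℝ} {φ : E → ℝ}
    (hφ : StrongConvexOn s m φ) {u v : E} (hmin : IsMinOn φ s u) (hu : u ∈ s) (hv : v ∈ s) :
    φ u + m / 2 * ‖v - u‖ ^ 2 ≤ φ v := by
  set c := m / 2 * ‖v - u‖ ^ 2 with hc
  have hsegment : ∀ θ ∈ Set.Ioo (0 : ℝ) 1, φ u + (1 - θ) * c ≤ φ v := by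
    rintro θ ⟨hθ0, hθ1⟩
    have hconv := hφ.2 hu hv (sub_nonneg.2 hθ1.le) hθ0.le (sub_add_cancel 1 θ)
    have hle := isMinOn_iff.1 hmin _ (hφ.1 hu hv (sub_nonneg.2 hθ1.le) hθ0.le (sub_add_cancel 1 θ))
    simp only [smul_eq_mul, norm_sub_rev u v, ← hc] at hconv
    have : θ * (φ u + (1 - θ) * c) ≤ θ * φ v := by linarith
    exact le_of_mul_le_mul_left this hθ0
  have htend : Tendsto (fun θ : ℝ ↦ φ u + (1 - θ) * c) (𝓝[>] 0) (𝓝 (φ u + c)) := by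
    apply tendsto_nhdsWithin_of_tendsto_nhds
    have : Continuous fun θ : ℝ ↦ φ u + (1 - θ) * c := by fun_prop
    simpa using this.tendsto 0
  exact le_of_tendsto htend (eventually_of_mem (Ioo_mem_nhdsGT one_pos) hsegment)

/-- With `z = ∇f(x) - lam • x`, this is the quadratic lower model of a `lam`-strongly convex `f`
at `x`, up to an additive constant. -/
noncomputable def surrogateLoss (lam : ℝ) (z w : E) : ℝ := ⟪z, w⟫ + lam / 2 * ‖w‖ ^ 2

theorem sub_le_surrogateLoss_sub {f : E → ℝ} {lam : ℝ} {g x y : E}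
    (hf : f x + ⟪g, y - x⟫ + lam / 2 * ‖x - y‖ ^ 2 ≤ f y) :
    f x - f y ≤ surrogateLoss lam (g - lam • x) x - surrogateLoss lam (g - lam • x) y := by
  have hexpand : surrogateLoss lam (g - lam • x) x - surrogateLoss lam (g - lam • x) y
      = ⟪g, x - y⟫ - lam / 2 * ‖x - y‖ ^ 2 := by
    simp only [surrogateLoss, inner_sub_left, inner_sub_right, real_inner_smul_left,
      real_inner_self_eq_norm_sq, norm_sub_sq_real]
    ring
  rw [← neg_sub x y, inner_neg_right] at hf
  linarith

theorem surrogateLoss_sub_le {lam R : ℝ} (hlam : 0 ≤ lam) (z : E) {a b : E}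
    (ha : ‖a‖ ≤ R) (hb : ‖b‖ ≤ R) :
    surrogateLoss lam z a - surrogateLoss lam z b ≤ (‖z‖ + lam * R) * ‖a - b‖ := by
  have hlin : ⟪z, a⟫ - ⟪z, b⟫ ≤ ‖z‖ * ‖a - b‖ := by
    rw [← inner_sub_right]
    exact real_inner_le_norm z (a - b)
  have hsq : ‖a‖ ^ 2 - ‖b‖ ^ 2 ≤ 2 * R * ‖a - b‖ := by
    have := norm_sub_norm_le a b
    nlinarith [norm_nonneg a, norm_nonneg b, norm_nonneg (a - b)]
  have := mul_le_mul_of_nonneg_left hsq hlam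
  simp only [surrogateLoss]
  nlinarith

theorem surrogateLoss_sub_le_of_norm_le {lam G R : ℝ} (hlam : 0 ≤ lam) {g x a b : E}
    (hg : ‖g‖ ≤ G) (hx : ‖x‖ ≤ R) (ha : ‖a‖ ≤ R) (hb : ‖b‖ ≤ R) :
    surrogateLoss lam (g - lam • x) a - surrogateLoss lam (g - lam • x) b
      ≤ (G + 2 * lam * R) * ‖a - b‖ := by
  have hz : ‖g - lam • x‖ ≤ G + lam * R := by
    calc ‖g - lam • x‖ ≤ ‖g‖ + lam * ‖x‖ := by
          simpa [norm_smul, abs_of_nonneg hlam] using norm_sub_le g (lam • x)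
      _ ≤ G + lam * R := by gcongr
  refine (surrogateLoss_sub_le hlam _ ha hb).trans (mul_le_mul_of_nonneg_right ?_ (norm_nonneg _))
  linarith

theorem strongConvexOn_sum_surrogateLoss {ι : Type*} {s : Set E} (hs : Convex ℝ s)
    (S : Finset ι) (z : ι → E) (lam : ℝ) :
    StrongConvexOn s (#S * lam) fun w ↦ ∑ i ∈ S, surrogateLoss lam (z i) w := by
  rw [strongConvexOn_iff_convex]
  have hlinear : (fun w ↦ ∑ i ∈ S, surrogateLoss lam (z i) w - #S * lam / 2 * ‖w‖ ^ 2)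
      = fun w ↦ ⟪∑ i ∈ S, z i, w⟫ := by
    ext w
    simp only [surrogateLoss, sum_add_distrib, sum_inner, sum_const, nsmul_eq_mul]
    ring
  rw [hlinear]
  exact (innerₛₗ ℝ (∑ i ∈ S, z i)).convexOn hs

theorem card_mul_norm_sub_le_of_isMinOn {ι : Type*} [DecidableEq ι] {K : Set E} (hK : Convex ℝ K)
    {lam L : ℝ} (hL : 0 ≤ L) (z : ι → E) {F S : Finset ι} (hFS : F ⊆ S) {x u : E}
    (hx : x ∈ K) (hu : u ∈ K)
    (hxmin : IsMinOn (fun w ↦ ∑ i ∈ F, surrogateLoss lam (z i) w) K x)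
    (humin : IsMinOn (fun w ↦ ∑ i ∈ S, surrogateLoss lam (z i) w) K u)
    (hLip : ∀ i ∈ S \ F, surrogateLoss lam (z i) x - surrogateLoss lam (z i) u ≤ L * ‖x - u‖) :
    #S * lam * ‖x - u‖ ≤ 2 * #(S \ F) * L := by
  have hgrowth := (strongConvexOn_sum_surrogateLoss hK S z lam).add_sq_le_of_isMinOn humin hu hx
  have hFx := isMinOn_iff.1 hxmin u hu
  have hdelayed : ∑ i ∈ S \ F, surrogateLoss lam (z i) x - ∑ i ∈ S \ F, surrogateLoss lam (z i) u
      ≤ #(S \ F) * (L * ‖x - u‖) := by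
    rw [← sum_sub_distrib, ← nsmul_eq_mul]
    exact sum_le_card_nsmul _ _ _ hLip
  have hsplit := fun w ↦ sum_sdiff (f := fun i ↦ surrogateLoss lam (z i) w) hFS
  have hquad : #S * lam / 2 * ‖x - u‖ ^ 2 ≤ #(S \ F) * L * ‖x - u‖ := by
    linarith [hsplit x, hsplit u]
  rcases (norm_nonneg (x - u)).eq_or_lt with h0 | hpos
  · rw [← h0, mul_zero]
    positivity
  · nlinarith

theorem card_Icc_sdiff_le {t d : ℕ} {F : Finset ℕ} (hF : Icc 1 (t - d) ⊆ F) :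
    #(Icc 1 t \ F) ≤ d := by
  calc #(Icc 1 t \ F) ≤ #(Icc 1 t \ Icc 1 (t - d)) := card_le_card (sdiff_subset_sdiff le_rfl hF)
    _ ≤ d := by
      rw [card_sdiff_of_subset (Icc_subset_Icc_right (Nat.sub_le t d)), Nat.card_Icc,
        Nat.card_Icc]
      omega

/-- The "be the leader" lemma. -/
theorem sum_Icc_le_of_isMinOn_partialSum {α : Type*} {K : Set α} (ℓ : ℕ → α → ℝ) {u : ℕ → α}
    (hu : ∀ k, u k ∈ K) (hmin : ∀ k, IsMinOn (fun w ↦ ∑ t ∈ Icc 1 k, ℓ t w) K (u k)) (T : ℕ) :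
    ∑ t ∈ Icc 1 T, ℓ t (u t) ≤ ∑ t ∈ Icc 1 T, ℓ t (u T) := by
  induction T with
  | zero => simp
  | succ k ih =>
    rw [sum_Icc_succ_top (Nat.le_add_left 1 k), sum_Icc_succ_top (Nat.le_add_left 1 k)]
    linarith [isMinOn_iff.1 (hmin k) (u (k + 1)) (hu (k + 1))]

theorem sum_Icc_inv_le_log_add_one (T : ℕ) : ∑ t ∈ Icc 1 T, (t : ℝ)⁻¹ ≤ Real.log T + 1 := by
  have := harmonic_le_one_add_log T
  rw [harmonic_eq_sum_Icc] at this
  push_cast at this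
  linarith

theorem sum_surrogateLoss_sub_le_of_delayed_isMinOn {K : Set E} (hKc : IsCompact K)
    (hK : Convex ℝ K) {lam L : ℝ} (hlam : 0 < lam) (hL : 0 ≤ L) (d T : ℕ) (z x : ℕ → E)
    (F : ℕ → Finset ℕ) (hF1 : ∀ t ∈ Icc 1 T, Icc 1 (t - d) ⊆ F t)
    (hF2 : ∀ t ∈ Icc 1 T, F t ⊆ Icc 1 t) (hxK : ∀ t ∈ Icc 1 T, x t ∈ K)
    (hxmin : ∀ t ∈ Icc 1 T, IsMinOn (fun w ↦ ∑ s ∈ F t, surrogateLoss lam (z s) w) K (x t))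
    (hLip : ∀ s ∈ Icc 1 T, ∀ a ∈ K, ∀ b ∈ K,
      surrogateLoss lam (z s) a - surrogateLoss lam (z s) b ≤ L * ‖a - b‖)
    {y : E} (hy : y ∈ K) :
    ∑ t ∈ Icc 1 T, (surrogateLoss lam (z t) (x t) - surrogateLoss lam (z t) y)
      ≤ 2 * d * L ^ 2 * (Real.log T + 1) / lam := by
  have hleader : ∀ k, ∃ u ∈ K, IsMinOn (fun w ↦ ∑ s ∈ Icc 1 k, surrogateLoss lam (z s) w) K u :=
    fun k ↦ hKc.exists_isMinOn ⟨y, hy⟩ (by unfold surrogateLoss; fun_prop)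
  choose u huK humin using hleader
  have hround : ∀ t ∈ Icc 1 T, surrogateLoss lam (z t) (x t) - surrogateLoss lam (z t) (u t)
      ≤ 2 * d * L ^ 2 / lam * (t : ℝ)⁻¹ := by
    intro t ht
    have htpos : (0 : ℝ) < t := by exact_mod_cast (mem_Icc.1 ht).1
    have hstab := card_mul_norm_sub_le_of_isMinOn hK hL z (hF2 t ht) (hxK t ht) (huK t)
      (hxmin t ht) (humin t) fun s hs ↦
        hLip s (Icc_subset_Icc_right (mem_Icc.1 ht).2 (mem_sdiff.1 hs).1) _ (hxK t ht) _ (huK t)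
    rw [Nat.card_Icc, Nat.add_sub_cancel] at hstab
    have hcard : (#(Icc 1 t \ F t) : ℝ) ≤ d := by exact_mod_cast card_Icc_sdiff_le (hF1 t ht)
    have hdist : ‖x t - u t‖ ≤ 2 * d * L / (t * lam) := by
      rw [le_div_iff₀ (by positivity)]
      nlinarith
    calc _ ≤ L * ‖x t - u t‖ := hLip t ht _ (hxK t ht) _ (huK t)
      _ ≤ L * (2 * d * L / (t * lam)) := by gcongr
      _ = _ := by ring
  have hbeTheLeader := (sum_Icc_le_of_isMinOn_partialSum _ huK humin T).trans
    (isMinOn_iff.1 (humin T) y hy)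
  calc ∑ t ∈ Icc 1 T, (surrogateLoss lam (z t) (x t) - surrogateLoss lam (z t) y)
      ≤ ∑ t ∈ Icc 1 T, (surrogateLoss lam (z t) (x t) - surrogateLoss lam (z t) (u t)) := by
        simp only [sum_sub_distrib] at hbeTheLeader ⊢
        linarith
    _ ≤ ∑ t ∈ Icc 1 T, 2 * d * L ^ 2 / lam * (t : ℝ)⁻¹ := sum_le_sum hround
    _ = 2 * d * L ^ 2 / lam * ∑ t ∈ Icc 1 T, (t : ℝ)⁻¹ := by rw [mul_sum]
    _ ≤ 2 * d * L ^ 2 / lam * (Real.log T + 1) := by gcongr; exact sum_Icc_inv_le_log_add_one T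
    _ = _ := by ring

end

theorem approximate_ftdl_unconstrained_regret_general {n : ℕ}
    (d T : ℕ)
    (lam G : ℝ) (hlam : 0 < lam) (hG : 0 ≤ G)
    (K' : Set (EuclideanSpace ℝ (Fin n)))
    (hK' : K' = {x : EuclideanSpace ℝ (Fin n) | ‖x‖ ≤ 2 * G / lam})
    (f : ℕ → EuclideanSpace ℝ (Fin n) → ℝ)
    (hsc : ∀ t ∈ Finset.Icc 1 T, ∀ x ∈ K', ∀ y ∈ K',
      f t x + ⟪gradient (f t) x, y - x⟫ + lam / 2 * ‖x - y‖ ^ 2 ≤ f t y)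
    (hGrad : ∀ t ∈ Finset.Icc 1 T, ∀ x ∈ K', ‖gradient (f t) x‖ ≤ G)
    (xstar : EuclideanSpace ℝ (Fin n)) (hxstarK : xstar ∈ K')
    (hxstarmin : ∀ y : EuclideanSpace ℝ (Fin n),
      ∑ t ∈ Finset.Icc 1 T, f t xstar ≤ ∑ t ∈ Finset.Icc 1 T, f t y)
    (F : ℕ → Finset ℕ)
    (hF1 : ∀ t ∈ Finset.Icc 1 T, Finset.Icc 1 (t - d) ⊆ F t)
    (hF2 : ∀ t ∈ Finset.Icc 1 T, F t ⊆ Finset.Icc 1 (t - 1))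
    (x z : ℕ → EuclideanSpace ℝ (Fin n))
    (hz : ∀ s ∈ Finset.Icc 1 T, z s = gradient (f s) (x s) - lam • x s)
    (hxK : ∀ t ∈ Finset.Icc 1 T, x t ∈ K')
    (hxmin : ∀ t ∈ Finset.Icc 1 T, ∀ y ∈ K',
      ∑ s ∈ F t, (⟪z s, x t⟫ + lam / 2 * ‖x t‖ ^ 2)
        ≤ ∑ s ∈ F t, (⟪z s, y⟫ + lam / 2 * ‖y‖ ^ 2)) :
    ∀ y : EuclideanSpace ℝ (Fin n),
      ∑ t ∈ Finset.Icc 1 T, f t (x t) - ∑ t ∈ Finset.Icc 1 T, f t y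
        ≤ 50 * d * G ^ 2 * (Real.log T + 1) / lam := by
  intro y
  have hball : K' = Metric.closedBall 0 (2 * G / lam) := by
    ext w
    simp [hK']
  have hnorm : ∀ w ∈ K', ‖w‖ ≤ 2 * G / lam := fun w hw ↦ by rwa [hK'] at hw
  have h5G : G + 2 * lam * (2 * G / lam) = 5 * G := by field_simp; ring
  have hLip : ∀ s ∈ Icc 1 T, ∀ a ∈ K', ∀ b ∈ K',
      surrogateLoss lam (z s) a - surrogateLoss lam (z s) b ≤ 5 * G * ‖a - b‖ := by
    intro s hs a ha b hb
    rw [hz s hs, ← h5G]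
    exact surrogateLoss_sub_le_of_norm_le hlam.le (hGrad s hs _ (hxK s hs))
      (hnorm _ (hxK s hs)) (hnorm a ha) (hnorm b hb)
  have hsurrogate := sum_surrogateLoss_sub_le_of_delayed_isMinOn
    (hball ▸ isCompact_closedBall 0 _) (hball ▸ convex_closedBall 0 _) hlam (by positivity) d T z x
    F hF1 (fun t ht ↦ (hF2 t ht).trans (Icc_subset_Icc_right (Nat.sub_le t 1))) hxK
    (fun t ht ↦ isMinOn_iff.2 (hxmin t ht)) hLip hxstarK
  have hdominated : ∀ t ∈ Icc 1 T,
      f t (x t) - f t xstar ≤ surrogateLoss lam (z t) (x t) - surrogateLoss lam (z t) xstar := by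
    intro t ht
    rw [hz t ht]
    exact sub_le_surrogateLoss_sub (hsc t ht _ (hxK t ht) _ hxstarK)
  have hregret := sum_le_sum hdominated
  rw [sum_sub_distrib] at hregret
  linarith [hxstarmin y, show (2 * d * (5 * G) ^ 2 * (Real.log T + 1) / lam : ℝ)
    = 50 * d * G ^ 2 * (Real.log T + 1) / lam by ring]

/-- Unconstrained extension of approximate FTDL: running it over the ball
`K' = {x : ‖x‖₂ ≤ 2G/λ}` yields regret at most `50dG²(ln T + 1)/λ` against the
unconstrained minimizer. -/
theorem approximate_ftdl_unconstrained_regret {n : ℕ}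
    (d T : ℕ) (hd : 1 ≤ d) (hT : 1 ≤ T)
    (lam G : ℝ) (hlam : 0 < lam) (hG : 0 ≤ G)
    (K' : Set (EuclideanSpace ℝ (Fin n)))
    (hK' : K' = {x : EuclideanSpace ℝ (Fin n) | ‖x‖ ≤ 2 * G / lam})
    (f : ℕ → EuclideanSpace ℝ (Fin n) → ℝ)
    (hsc : ∀ t ∈ Finset.Icc 1 T, ∀ x ∈ K', ∀ y ∈ K',
      f t x + ⟪gradient (f t) x, y - x⟫ + lam / 2 * ‖x - y‖ ^ 2 ≤ f t y)
    (hGrad : ∀ t ∈ Finset.Icc 1 T, ∀ x ∈ K', ‖gradient (f t) x‖ ≤ G)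
    (xstar : EuclideanSpace ℝ (Fin n)) (hxstarK : xstar ∈ K')
    (hxstarmin : ∀ y : EuclideanSpace ℝ (Fin n),
      ∑ t ∈ Finset.Icc 1 T, f t xstar ≤ ∑ t ∈ Finset.Icc 1 T, f t y)
    (F : ℕ → Finset ℕ)
    (hF1 : ∀ t ∈ Finset.Icc 1 T, Finset.Icc 1 (t - d) ⊆ F t)
    (hF2 : ∀ t ∈ Finset.Icc 1 T, F t ⊆ Finset.Icc 1 (t - 1))
    (x z : ℕ → EuclideanSpace ℝ (Fin n))
    (hz : ∀ s ∈ Finset.Icc 1 T, z s = gradient (f s) (x s) - lam • x s)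
    (hxK : ∀ t ∈ Finset.Icc 1 T, x t ∈ K')
    (hxmin : ∀ t ∈ Finset.Icc 1 T, ∀ y ∈ K',
      ∑ s ∈ F t, (⟪z s, x t⟫ + lam / 2 * ‖x t‖ ^ 2)
        ≤ ∑ s ∈ F t, (⟪z s, y⟫ + lam / 2 * ‖y‖ ^ 2)) :
    ∀ y : EuclideanSpace ℝ (Fin n),
      ∑ t ∈ Finset.Icc 1 T, f t (x t) - ∑ t ∈ Finset.Icc 1 T, f t y
        ≤ 50 * d * G ^ 2 * (Real.log T + 1) / lam :=
  approximate_ftdl_unconstrained_regret_general d T lam G hlam hG K' hK' f hsc hGrad xstar hxstarK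
    hxstarmin F hF1 hF2 x z hz hxK hxmin
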